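/- Let P ⊆ ℚ^n be a polyhedron and let P̃ be the closure of the cone over P in ℚ^n ⊕ ℚ. Every face of P̃ is either contained in ℚ^n ⊕ {0} (and of the form F̃ ∩ (ℚ^n ⊕ {0}) corresponding to a face of rec(P)), or is of the form Ẽ (the closure of the cone over E) for a unique face E of P; these two sets of faces are disjoint. -/
import Mathlib


open Finset Set Pointwise

noncomputable section

variable {ι : Type*}

/-- The standard pairing between `ι → ℚ` and itself (functionals as vectors). -/
def dotp [Fintype ι] (w x : ι → ℚ) : ℚ := ∑ i, w i * x i

/-- The face of `P` on which the linear functional `w` attains its minimum. -/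
def faceOf [Fintype ι] (P : Set (ι → ℚ)) (w : ι → ℚ) : Set (ι → ℚ) :=
  {x | x ∈ P ∧ ∀ y ∈ P, dotp w x ≤ dotp w y}

/-- `F` is a (nonempty) face of `P`. -/
def IsFaceOf [Fintype ι] (P F : Set (ι → ℚ)) : Prop :=
  F.Nonempty ∧ ∃ w, F = faceOf P w

/-- The (closed) inner normal cone of a face `F` of `P`: all functionals minimized on `F`. -/
def normalCone [Fintype ι] (P F : Set (ι → ℚ)) : Set (ι → ℚ) :=
  {w | F ⊆ faceOf P w}

/-- The recession cone of `P`. -/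
def recCone (P : Set (ι → ℚ)) : Set (ι → ℚ) := {u | ∀ x ∈ P, x + u ∈ P}

/-- The dual cone of `C`. -/
def dualCone [Fintype ι] (C : Set (ι → ℚ)) : Set (ι → ℚ) := {w | ∀ x ∈ C, 0 ≤ dotp w x}

/-- The relative interior of a convex set `S`. -/
def relint (S : Set (ι → ℚ)) : Set (ι → ℚ) :=
  {x | x ∈ S ∧ ∀ y ∈ S, ∃ ε : ℚ, 0 < ε ∧ x + ε • (x - y) ∈ S}

/-- `P` is a polyhedron `{x | A x ≥ b}`. -/
def IsPolyhedron [Fintype ι] (P : Set (ι → ℚ)) : Prop :=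
  ∃ (r : ℕ) (A : Fin r → ι → ℚ) (b : Fin r → ℚ), P = {x | ∀ i, b i ≤ dotp (A i) x}

/-- `C` is a polyhedral cone `{x | A x ≥ 0}`. -/
def IsPolyhedralCone [Fintype ι] (C : Set (ι → ℚ)) : Prop :=
  ∃ (r : ℕ) (A : Fin r → ι → ℚ), C = {x | ∀ i, 0 ≤ dotp (A i) x}

/-- Two polyhedra are normally equivalent: they have the same inner normal fan,
i.e. the same support and the same partition of functionals by faces. -/
def normallyEquiv [Fintype ι] (P P' : Set (ι → ℚ)) : Prop :=
  (∀ w, (faceOf P w).Nonempty ↔ (faceOf P' w).Nonempty) ∧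
  ∀ w w', faceOf P w = faceOf P w' ↔ faceOf P' w = faceOf P' w'

/-- `F` is the smallest face of `P` containing the set `S`. -/
def IsSmallestFaceContaining [Fintype ι] (P S F : Set (ι → ℚ)) : Prop :=
  IsFaceOf P F ∧ S ⊆ F ∧ ∀ G, IsFaceOf P G → S ⊆ G → F ⊆ G

/-- The homogenization `P̃` of `P`: the closure in `(ι ⊕ Unit) → ℚ` of the cone over `P`
placed at height `1`. -/
def tildeSet (P : Set (ι → ℚ)) : Set ((ι ⊕ Unit) → ℚ) :=
  closure {p | ∃ x ∈ P, ∃ l : ℚ, 0 < l ∧ p = Sum.elim (l • x) (fun _ => l)}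

set_option linter.unusedSectionVars false

section helpers
variable [Fintype ι]

lemma dotp_smul_right (w x : ι → ℚ) (t : ℚ) : dotp w (t • x) = t * dotp w x := by
  simp [dotp, Finset.mul_sum, mul_left_comm]

lemma dotp_zero_right (w : ι → ℚ) : dotp w (0 : ι → ℚ) = 0 := by simp [dotp]

lemma dotp_add_right (w x y : ι → ℚ) : dotp w (x + y) = dotp w x + dotp w y := by
  simp [dotp, mul_add, Finset.sum_add_distrib]

lemma dotp_neg_left (w x : ι → ℚ) : dotp (-w) x = - dotp w x := by
  simp [dotp]

lemma dotp_split (w p : (ι ⊕ Unit) → ℚ) :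
    dotp w p = dotp (w ∘ Sum.inl) (p ∘ Sum.inl) + w (Sum.inr ()) * p (Sum.inr ()) := by
  simp [dotp, Fintype.sum_sum_type]

lemma sum_elim_eq (p : (ι ⊕ Unit) → ℚ) :
    p = Sum.elim (p ∘ Sum.inl) (fun _ => p (Sum.inr ())) := by
  funext j; rcases j with i | u
  · rfl
  · cases u; rfl

lemma continuous_coordl (i : ι) : Continuous fun p : (ι ⊕ Unit) → ℚ => p (Sum.inl i) :=
  continuous_apply _

lemma continuous_dotp_inl (M : ι → ℚ) :
    Continuous fun p : (ι ⊕ Unit) → ℚ => dotp M (p ∘ Sum.inl) := by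
  unfold dotp
  exact continuous_finset_sum _ fun i _ => (continuous_const.mul (continuous_apply _))

lemma isClosed_homog (r : ℕ) (M : Fin r → ι → ℚ) (c : Fin r → ℚ) :
    IsClosed {p : (ι ⊕ Unit) → ℚ |
      0 ≤ p (Sum.inr ()) ∧ ∀ i, p (Sum.inr ()) * c i ≤ dotp (M i) (p ∘ Sum.inl)} := by
  have : {p : (ι ⊕ Unit) → ℚ |
      0 ≤ p (Sum.inr ()) ∧ ∀ i, p (Sum.inr ()) * c i ≤ dotp (M i) (p ∘ Sum.inl)}
      = {p : (ι ⊕ Unit) → ℚ | 0 ≤ p (Sum.inr ())} ∩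
        ⋂ i, {p : (ι ⊕ Unit) → ℚ | p (Sum.inr ()) * c i ≤ dotp (M i) (p ∘ Sum.inl)} := by
    ext p; simp [Set.mem_iInter]
  rw [this]
  refine (isClosed_le continuous_const (continuous_apply _)).inter
    (isClosed_iInter fun i => isClosed_le ((continuous_apply _).mul continuous_const)
      (continuous_dotp_inl _))

lemma tildeSet_eq (r : ℕ) (M : Fin r → ι → ℚ) (c : Fin r → ℚ)
    (hne : {x : ι → ℚ | ∀ i, c i ≤ dotp (M i) x}.Nonempty) :
    tildeSet {x : ι → ℚ | ∀ i, c i ≤ dotp (M i) x} =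
      {p | 0 ≤ p (Sum.inr ()) ∧ ∀ i, p (Sum.inr ()) * c i ≤ dotp (M i) (p ∘ Sum.inl)} := by
  apply Set.Subset.antisymm
  · apply closure_minimal _ (isClosed_homog r M c)
    rintro p ⟨x, hx, l, hl, rfl⟩
    constructor
    · simpa using hl.le
    · intro i
      have : (Sum.elim (l • x) (fun _ => l) : (ι ⊕ Unit) → ℚ) ∘ Sum.inl = l • x := rfl
      rw [this, dotp_smul_right]
      simpa using mul_le_mul_of_nonneg_left (hx i) hl.le
  · rintro p ⟨h0, hi⟩
    rcases lt_or_eq_of_le h0 with hpos | hzero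
    · apply subset_closure
      refine ⟨(p (Sum.inr ()))⁻¹ • (p ∘ Sum.inl), ?_, p (Sum.inr ()), hpos, ?_⟩
      · intro i
        rw [show ((p (Sum.inr ()))⁻¹ • p ∘ Sum.inl : ι → ℚ) = (p (Sum.inr ()))⁻¹ • (p ∘ Sum.inl) from rfl, dotp_smul_right, le_inv_mul_iff₀ hpos]
        exact hi i
      · rw [smul_smul, mul_inv_cancel₀ hpos.ne', one_smul]
        exact sum_elim_eq p
    · -- height zero: limit argument
      obtain ⟨x0, hx0⟩ := hne
      have hten : Filter.Tendsto
          (fun k : ℕ => (Sum.elim (((k:ℚ)+1)⁻¹ • x0 + p ∘ Sum.inl) (fun _ => ((k:ℚ)+1)⁻¹) :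
            (ι ⊕ Unit) → ℚ)) Filter.atTop (nhds p) := by
        have hinv : Filter.Tendsto (fun k : ℕ => ((k:ℚ)+1)⁻¹) Filter.atTop (nhds 0) := by
          apply Filter.Tendsto.inv_tendsto_atTop
          exact Filter.tendsto_atTop_add_const_right _ 1 tendsto_natCast_atTop_atTop
        rw [tendsto_pi_nhds]
        rintro (i | u)
        · simp only [Sum.elim_inl, Pi.add_apply, Pi.smul_apply, smul_eq_mul]
          have : p (Sum.inl i) = 0 * x0 i + p (Sum.inl i) := by ring
          rw [this]
          exact ((hinv.mul_const _).add_const _)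
        · cases u
          simp only [Sum.elim_inr]
          exact hzero ▸ hinv
      refine mem_closure_of_tendsto hten ?_
      filter_upwards with k
      refine ⟨x0 + ((k:ℚ)+1) • (p ∘ Sum.inl), ?_, ((k:ℚ)+1)⁻¹, by positivity, ?_⟩
      · intro i
        rw [show ((x0 + ((k:ℚ)+1) • p ∘ Sum.inl : ι → ℚ)) = x0 + ((k:ℚ)+1) • (p ∘ Sum.inl) from rfl, dotp_add_right, dotp_smul_right]

        have h1 : 0 ≤ dotp (M i) (p ∘ Sum.inl) := by
          have := hi i; rw [← hzero] at this; simpa using this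
        have h2 := mul_nonneg (by positivity : (0:ℚ) ≤ (k:ℚ)+1) h1
        linarith [hx0 i]
      · funext j
        rcases j with i | u
        · simp only [Sum.elim_inl, Pi.add_apply, Pi.smul_apply, smul_eq_mul,
            Function.comp_apply]
          have hk : ((k:ℚ)+1) ≠ 0 := by positivity
          field_simp
        · cases u; rfl


def homog (r : ℕ) (A : Fin r → ι → ℚ) (b : Fin r → ℚ) [Fintype ι] :
    Set ((ι ⊕ Unit) → ℚ) :=
  {p | 0 ≤ p (Sum.inr ()) ∧ ∀ i, p (Sum.inr ()) * b i ≤ dotp (A i) (p ∘ Sum.inl)}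

lemma tildeSet_eq' (r : ℕ) (A : Fin r → ι → ℚ) (b : Fin r → ℚ)
    (hne : {x : ι → ℚ | ∀ i, b i ≤ dotp (A i) x}.Nonempty) :
    tildeSet {x : ι → ℚ | ∀ i, b i ≤ dotp (A i) x} = homog r A b :=
  tildeSet_eq r A b hne

lemma forall_fin_snoc_snoc {r : ℕ} (Q : Fin (r+2) → Prop) :
    (∀ i, Q i) ↔ (∀ j : Fin r, Q (j.castSucc.castSucc)) ∧
      Q ((Fin.last r).castSucc) ∧ Q (Fin.last (r+1)) := by
  constructor
  · intro h; exact ⟨fun j => h _, h _, h _⟩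
  · rintro ⟨h1, h2, h3⟩ i
    refine Fin.lastCases h3 (fun j => ?_) i
    exact Fin.lastCases h2 (fun j' => h1 j') j

lemma faceOf_rep (r : ℕ) (A : Fin r → ι → ℚ) (b : Fin r → ℚ) (w x0 : ι → ℚ)
    (hx0 : x0 ∈ faceOf {x : ι → ℚ | ∀ i, b i ≤ dotp (A i) x} w) :
    faceOf {x : ι → ℚ | ∀ i, b i ≤ dotp (A i) x} w =
      {x | ∀ i : Fin (r+2), (Fin.snoc (Fin.snoc b (dotp w x0)) (-(dotp w x0)) : Fin (r+2) → ℚ) i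
        ≤ dotp ((Fin.snoc (Fin.snoc A w) (-w) : Fin (r+2) → ι → ℚ) i) x} := by
  obtain ⟨hx0P, hx0min⟩ := hx0
  ext x
  rw [Set.mem_setOf_eq, forall_fin_snoc_snoc]
  simp only [Fin.snoc_castSucc, Fin.snoc_last, dotp_neg_left, neg_le_neg_iff]
  constructor
  · rintro ⟨hxP, hxmin⟩
    exact ⟨fun j => hxP j, hx0min x hxP, hxmin x0 hx0P⟩
  · rintro ⟨h1, h2, h3⟩
    have hxP : x ∈ {x : ι → ℚ | ∀ i, b i ≤ dotp (A i) x} := h1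
    refine ⟨hxP, fun y hy => ?_⟩
    have := hx0min y hy
    linarith

lemma slice_mem (r : ℕ) (A : Fin r → ι → ℚ) (b : Fin r → ℚ)
    (hne : {x : ι → ℚ | ∀ i, b i ≤ dotp (A i) x}.Nonempty) (x : ι → ℚ) :
    Sum.elim x (fun _ => (1:ℚ)) ∈ tildeSet {x : ι → ℚ | ∀ i, b i ≤ dotp (A i) x}
      ↔ x ∈ {x : ι → ℚ | ∀ i, b i ≤ dotp (A i) x} := by
  rw [tildeSet_eq' r A b hne]
  constructor
  · rintro ⟨-, h⟩ i
    simpa using h i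
  · intro h
    exact ⟨zero_le_one, fun i => by simpa using h i⟩

lemma recCone_eq (r : ℕ) (A : Fin r → ι → ℚ) (b : Fin r → ℚ)
    (hne : {x : ι → ℚ | ∀ i, b i ≤ dotp (A i) x}.Nonempty) :
    recCone {x : ι → ℚ | ∀ i, b i ≤ dotp (A i) x} = {u | ∀ i, 0 ≤ dotp (A i) u} := by
  ext u
  constructor
  · intro hu i
    obtain ⟨x0, hx0⟩ := hne
    have hk : ∀ k : ℕ, x0 + (k:ℚ) • u ∈ {x : ι → ℚ | ∀ i, b i ≤ dotp (A i) x} := by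
      intro k
      induction k with
      | zero => simpa using hx0
      | succ k ih =>
          have h2 := hu _ ih
          have heq : x0 + ((k:ℚ)+1) • u = (x0 + (k:ℚ) • u) + u := by
            funext j; simp; ring
          rw [Nat.cast_succ, heq]
          exact h2
    by_contra hneg
    push_neg at hneg
    obtain ⟨k, hk'⟩ := exists_nat_gt ((dotp (A i) x0 - b i) / (-(dotp (A i) u)))
    have h1 := hk k i
    rw [dotp_add_right, dotp_smul_right] at h1
    have hpos : 0 < -(dotp (A i) u) := by linarith
    rw [div_lt_iff₀ hpos] at hk'
    linarith
  · intro hu x hx i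
    show b i ≤ dotp (A i) (x + u)
    rw [dotp_add_right]
    have := hx i
    linarith [hu i]

lemma cone_face_facts (r : ℕ) (A : Fin r → ι → ℚ) (b : Fin r → ℚ)
    (w f : (ι ⊕ Unit) → ℚ) (hf : f ∈ faceOf (homog r A b) w) :
    (∀ p ∈ homog r A b, 0 ≤ dotp w p) ∧
      faceOf (homog r A b) w = {p | p ∈ homog r A b ∧ dotp w p = 0} := by
  obtain ⟨hfD, hmin⟩ := hf
  have h0D : (0 : (ι ⊕ Unit) → ℚ) ∈ homog r A b := by
    refine ⟨le_refl _, fun i => ?_⟩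
    have : ((0 : (ι ⊕ Unit) → ℚ) ∘ Sum.inl) = (0 : ι → ℚ) := rfl
    rw [this, dotp_zero_right]
    simp
  have h2f : (2:ℚ) • f ∈ homog r A b := by
    obtain ⟨h1, h2⟩ := hfD
    constructor
    · simp only [Pi.smul_apply, smul_eq_mul]; linarith
    · intro i
      have : (((2:ℚ) • f) ∘ Sum.inl) = (2:ℚ) • (f ∘ Sum.inl) := rfl
      rw [this, dotp_smul_right]
      have := h2 i
      simp only [Pi.smul_apply, smul_eq_mul]
      nlinarith
  have hle0 : dotp w f ≤ 0 := by
    have := hmin 0 h0D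
    rwa [dotp_zero_right] at this
  have hge0 : 0 ≤ dotp w f := by
    have := hmin _ h2f
    rw [dotp_smul_right] at this
    linarith
  have hf0 : dotp w f = 0 := le_antisymm hle0 hge0
  have hnn : ∀ p ∈ homog r A b, 0 ≤ dotp w p := by
    intro p hp
    have := hmin p hp
    linarith
  refine ⟨hnn, ?_⟩
  ext p
  constructor
  · rintro ⟨hpD, hpmin⟩
    refine ⟨hpD, le_antisymm ?_ (hnn p hpD)⟩
    have := hpmin f hfD
    linarith
  · rintro ⟨hpD, hp0⟩
    refine ⟨hpD, fun y hy => ?_⟩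
    rw [hp0]
    exact hnn y hy

end helpers

/-- every face of `P̃` is either a face of `rec(P) × {0}` (contained in
height zero, corresponding to a face of `rec(P)`) or of the form `Ẽ` for a unique
face `E` of `P`, and these two kinds are disjoint. -/
theorem faces_of_tilde (n : ℕ) (P : Set (Fin n → ℚ)) (hP : IsPolyhedron P)
    (hne : P.Nonempty) (F : Set ((Fin n ⊕ Unit) → ℚ)) (hF : IsFaceOf (tildeSet P) F) :
    ((∃ G, IsFaceOf (recCone P) G ∧
          F = {p : (Fin n ⊕ Unit) → ℚ | p ∘ Sum.inl ∈ G ∧ p (Sum.inr ()) = 0}) ∧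
        ¬ ∃ E, IsFaceOf P E ∧ F = tildeSet E) ∨
      ((∃! E, IsFaceOf P E ∧ F = tildeSet E) ∧
        ¬ F ⊆ {p : (Fin n ⊕ Unit) → ℚ | p (Sum.inr ()) = 0}) := by
  obtain ⟨r, A, b, rfl⟩ := hP
  set P : Set (Fin n → ℚ) := {x | ∀ i, b i ≤ dotp (A i) x} with hPdef
  have hDP : tildeSet P = homog r A b := tildeSet_eq' r A b hne
  obtain ⟨⟨f, hfF⟩, w, hFw⟩ := hF
  rw [hDP] at hFw
  have hfface : f ∈ faceOf (homog r A b) w := by rw [← hFw]; exact hfF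
  obtain ⟨hnn, hfaceEq⟩ := cone_face_facts r A b w f hfface
  have hFdesc : F = {p | p ∈ homog r A b ∧ dotp w p = 0} := by rw [hFw, hfaceEq]
  have helim0 : ∀ u : Fin n → ℚ,
      (Sum.elim u (fun _ => (0:ℚ)) ∈ homog r A b) ↔ ∀ i, 0 ≤ dotp (A i) u := by
    intro u
    constructor
    · rintro ⟨-, h⟩ i; simpa using h i
    · intro h; exact ⟨le_refl _, fun i => by simpa using h i⟩
  have hdot0 : ∀ u : Fin n → ℚ,
      dotp w (Sum.elim u (fun _ => (0:ℚ))) = dotp (w ∘ Sum.inl) u := by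
    intro u; rw [dotp_split]; simp
  have hrec : recCone P = {u | ∀ i, 0 ≤ dotp (A i) u} := recCone_eq r A b hne
  have hyD : ∀ y ∈ P, Sum.elim y (fun _ => (1:ℚ)) ∈ homog r A b := by
    intro y hy
    exact ⟨zero_le_one, fun i => by simpa using hy i⟩
  by_cases hsub : F ⊆ {p : (Fin n ⊕ Unit) → ℚ | p (Sum.inr ()) = 0}
  · left
    have hG : ∀ u : Fin n → ℚ,
        u ∈ faceOf (recCone P) (w ∘ Sum.inl) ↔ Sum.elim u (fun _ => (0:ℚ)) ∈ F := by
      intro u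
      constructor
      · rintro ⟨huR, humin⟩
        rw [hFdesc]
        rw [hrec] at huR
        refine ⟨(helim0 u).mpr huR, ?_⟩
        have h0R : (0 : Fin n → ℚ) ∈ recCone P := by
          intro x hx; simpa using hx
        have h1 := humin 0 h0R
        rw [dotp_zero_right] at h1
        have h2 : 0 ≤ dotp w (Sum.elim u (fun _ => (0:ℚ))) :=
          hnn _ ((helim0 u).mpr huR)
        rw [hdot0 u] at h2
        rw [hdot0 u]
        exact le_antisymm h1 h2
      · intro hmem
        rw [hFdesc] at hmem
        obtain ⟨hD, h0⟩ := hmem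
        rw [hdot0 u] at h0
        constructor
        · rw [hrec]; exact (helim0 u).mp hD
        · intro v hv
          rw [hrec] at hv
          have hv' : 0 ≤ dotp w (Sum.elim v (fun _ => (0:ℚ))) :=
            hnn _ ((helim0 v).mpr hv)
          rw [hdot0 v] at hv'
          rw [h0]
          exact hv'
    constructor
    · refine ⟨faceOf (recCone P) (w ∘ Sum.inl), ⟨⟨f ∘ Sum.inl, ?_⟩, ⟨_, rfl⟩⟩, ?_⟩
      · refine (hG _).mpr ?_
        have hf0 : f (Sum.inr ()) = 0 := hsub hfF
        have hfelim : Sum.elim (f ∘ Sum.inl) (fun _ => (0:ℚ)) = f := by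
          conv_lhs => rw [← hf0]
          exact (sum_elim_eq f).symm
        rwa [hfelim]
      · ext p
        constructor
        · intro hp
          have hp0 : p (Sum.inr ()) = 0 := hsub hp
          refine ⟨(hG _).mpr ?_, hp0⟩
          have heq : Sum.elim (p ∘ Sum.inl) (fun _ => (0:ℚ)) = p := by
            conv_lhs => rw [← hp0]
            exact (sum_elim_eq p).symm
          rwa [heq]
        · rintro ⟨h1, h2⟩
          have hm := (hG _).mp h1
          have heq : Sum.elim (p ∘ Sum.inl) (fun _ => (0:ℚ)) = p := by
            conv_lhs => rw [← h2]
            exact (sum_elim_eq p).symm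
          rwa [heq] at hm
    · rintro ⟨E, ⟨⟨x, hx⟩, -⟩, hFE⟩
      have hq : Sum.elim x (fun _ => (1:ℚ)) ∈ tildeSet E :=
        subset_closure ⟨x, hx, 1, one_pos, by rw [one_smul]⟩
      rw [← hFE] at hq
      have := hsub hq
      simp at this
  · right
    have hex : ∃ f', f' ∈ F ∧ 0 < f' (Sum.inr ()) := by
      by_contra h
      push_neg at h
      apply hsub
      intro p hp
      have h1 : 0 ≤ p (Sum.inr ()) := by
        rw [hFdesc] at hp; exact hp.1.1
      exact le_antisymm (h p hp) h1
    obtain ⟨f', hf'F, hl⟩ := hex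
    have hf'D : f' ∈ homog r A b := by rw [hFdesc] at hf'F; exact hf'F.1
    have hf'0 : dotp w f' = 0 := by rw [hFdesc] at hf'F; exact hf'F.2
    set l := f' (Sum.inr ()) with hldef
    set x0 : Fin n → ℚ := l⁻¹ • (f' ∘ Sum.inl) with hx0def
    have hx0P : x0 ∈ P := by
      rw [hPdef]
      intro i
      rw [hx0def, dotp_smul_right, le_inv_mul_iff₀ hl]
      exact hf'D.2 i
    have hwsplit : dotp (w ∘ Sum.inl) (f' ∘ Sum.inl) + w (Sum.inr ()) * l = 0 := by
      rw [← hf'0, dotp_split]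
    have hx0dot : dotp (w ∘ Sum.inl) x0 = - w (Sum.inr ()) := by
      rw [hx0def, dotp_smul_right]
      have h2 : dotp (w ∘ Sum.inl) (f' ∘ Sum.inl) = -(w (Sum.inr ()) * l) := by linarith
      rw [h2]
      field_simp
    have hx0E : x0 ∈ faceOf P (w ∘ Sum.inl) := by
      refine ⟨hx0P, fun y hy => ?_⟩
      have h1 := hnn _ (hyD y hy)
      rw [dotp_split] at h1
      have hc1 : ((Sum.elim y (fun _ => (1:ℚ)) : (Fin n ⊕ Unit) → ℚ) ∘ Sum.inl) = y := rfl
      rw [hc1, Sum.elim_inr, mul_one] at h1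
      rw [hx0dot]
      linarith
    have hErep := faceOf_rep r A b (w ∘ Sum.inl) x0 hx0E
    have hEne' : {x : Fin n → ℚ | ∀ i : Fin (r+2),
        (Fin.snoc (Fin.snoc b (dotp (w ∘ Sum.inl) x0)) (-(dotp (w ∘ Sum.inl) x0)) :
          Fin (r+2) → ℚ) i
        ≤ dotp ((Fin.snoc (Fin.snoc A (w ∘ Sum.inl)) (-(w ∘ Sum.inl)) :
          Fin (r+2) → Fin n → ℚ) i) x}.Nonempty := by
      rw [← hErep]; exact ⟨x0, hx0E⟩
    have hTE : tildeSet (faceOf P (w ∘ Sum.inl)) =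
        homog (r+2) (Fin.snoc (Fin.snoc A (w ∘ Sum.inl)) (-(w ∘ Sum.inl)))
          (Fin.snoc (Fin.snoc b (dotp (w ∘ Sum.inl) x0)) (-(dotp (w ∘ Sum.inl) x0))) := by
      rw [hErep]
      exact tildeSet_eq' (r+2) _ _ hEne'
    have hFE : F = tildeSet (faceOf P (w ∘ Sum.inl)) := by
      rw [hTE, hFdesc]
      ext p
      simp only [homog, Set.mem_setOf_eq, forall_fin_snoc_snoc, Fin.snoc_castSucc,
        Fin.snoc_last, dotp_neg_left]
      constructor
      · rintro ⟨⟨h0, hD⟩, hw0⟩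
        rw [dotp_split] at hw0
        refine ⟨h0, fun j => hD j, ?_, ?_⟩ <;> nlinarith [hx0dot]
      · rintro ⟨h0, hD, h1, h2⟩
        refine ⟨⟨h0, fun j => hD j⟩, ?_⟩
        rw [dotp_split]
        nlinarith [hx0dot]
    refine ⟨⟨faceOf P (w ∘ Sum.inl), ⟨⟨⟨x0, hx0E⟩, ⟨_, rfl⟩⟩, hFE⟩, ?_⟩, hsub⟩
    rintro E' ⟨⟨⟨x', hx'⟩, w'', rfl⟩, hFE'⟩
    have hrep' := faceOf_rep r A b w'' x' hx'
    ext y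
    have h1 : y ∈ faceOf P w'' ↔
        Sum.elim y (fun _ => (1:ℚ)) ∈ tildeSet (faceOf P w'') := by
      rw [hrep']
      exact (slice_mem _ _ _ (by rw [← hrep']; exact ⟨x', hx'⟩) y).symm
    have h2 : y ∈ faceOf P (w ∘ Sum.inl) ↔
        Sum.elim y (fun _ => (1:ℚ)) ∈ tildeSet (faceOf P (w ∘ Sum.inl)) := by
      rw [hErep]
      exact (slice_mem _ _ _ (by rw [← hErep]; exact ⟨x0, hx0E⟩) y).symm
    rw [h1, ← hFE', hFE]
    exact h2.symm
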